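/- arXiv:2004.09300 — 2 statements merged into one kernel-verified Lean document; each statement's English description precedes it below -/
import Mathlib

section
/- Let γ ∈ [0,1]. The function λ(v,η) = [⟨v⟩^γ(1 + |v|² + |η|² + |ξ|² + |v∧η|² + |v∧ξ|²)]^{1/2} on ℝ³×ℝ³ (with parameter ξ ∈ ℝ³) is an admissible weight: there exist constants C, N depending only on γ such that for all Y = (v,η) and Y' = (v',η'), λ(Y) ≤ C λ(Y') (1 + |Y − Y'|)^N, uniformly in ξ. In fact one may take N = (4+γ)/2 up to constants. -/
open Real

noncomputable def jb (y : EuclideanSpace ℝ (Fin 3)) : ℝ :=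
  Real.sqrt (1 + ‖y‖ ^ 2)

noncomputable def cross (v w : EuclideanSpace ℝ (Fin 3)) : EuclideanSpace ℝ (Fin 3) :=
  (WithLp.equiv 2 (Fin 3 → ℝ)).symm
    ![v 1 * w 2 - v 2 * w 1, v 2 * w 0 - v 0 * w 2, v 0 * w 1 - v 1 * w 0]

/-- The symbol `λ(v,η) = [⟨v⟩^γ(1+|v|²+|η|²+|ξ|²+|v∧η|²+|v∧ξ|²)]^{1/2}`. -/
noncomputable def lam (γ : ℝ) (ξ v η : EuclideanSpace ℝ (Fin 3)) : ℝ :=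
  Real.sqrt (jb v ^ γ *
    (1 + ‖v‖ ^ 2 + ‖η‖ ^ 2 + ‖ξ‖ ^ 2 + ‖cross v η‖ ^ 2 + ‖cross v ξ‖ ^ 2))

/- Auxiliary scalar lemmas -/

lemma aux_sq_sum2 (a a' d : ℝ) (ha0 : 0 ≤ a) (h : a ≤ a' + d) : a^2 ≤ 2*a'^2 + 2*d^2 := by
  nlinarith [sq_nonneg (a'-d), pow_le_pow_left₀ ha0 h 2]

lemma aux_sq_sum4 (x p q r s : ℝ) (hx : 0 ≤ x) (h : x ≤ p+q+r+s) :
    x^2 ≤ 4*(p^2+q^2+r^2+s^2) := by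
  nlinarith [sq_nonneg (p-q), sq_nonneg (p-r), sq_nonneg (p-s), sq_nonneg (q-r),
    sq_nonneg (q-s), sq_nonneg (r-s), pow_le_pow_left₀ hx h 2]

lemma aux_sq_sum2' (y p q : ℝ) (hy : 0 ≤ y) (h : y ≤ p+q) : y^2 ≤ 2*(p^2+q^2) := by
  nlinarith [sq_nonneg (p-q), pow_le_pow_left₀ hy h 2]

lemma aux_sqrt_peetre (a' d : ℝ) (ha' : 0 ≤ a') (hd : 0 ≤ d) :
    Real.sqrt (1+(a'+d)^2) ≤ Real.sqrt (1+a'^2) + d := by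
  rw [show Real.sqrt (1+a'^2) + d = Real.sqrt ((Real.sqrt (1+a'^2)+d)^2) from
    (Real.sqrt_sq (by positivity)).symm]
  apply Real.sqrt_le_sqrt
  have hss : (Real.sqrt (1+a'^2))^2 = 1+a'^2 := Real.sq_sqrt (by positivity)
  have hs : a' ≤ Real.sqrt (1+a'^2) := by
    calc a' = Real.sqrt (a'^2) := (Real.sqrt_sq ha').symm
      _ ≤ _ := Real.sqrt_le_sqrt (by linarith)
  nlinarith [mul_le_mul_of_nonneg_right hs hd]

/-- The purely scalar core of the admissibility estimate. -/
lemma main_scalar_ineq (γ d a b c x y a' b' x' y' : ℝ)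
    (hγ0 : 0 ≤ γ) (hd0 : 0 ≤ d)
    (ha'0 : 0 ≤ a') (_hb'0 : 0 ≤ b') (_hc0 : 0 ≤ c) (_hx'0 : 0 ≤ x') (_hy'0 : 0 ≤ y')
    (ha0 : 0 ≤ a) (hb0 : 0 ≤ b) (hx0 : 0 ≤ x) (hy0 : 0 ≤ y)
    (ha : a ≤ a' + d) (hb : b ≤ b' + d)
    (hx : x ≤ d*d + d*b' + a'*d + x') (hy : y ≤ d*c + y') :
    Real.sqrt (Real.sqrt (1+a^2) ^ γ * (1 + a^2 + b^2 + c^2 + x^2 + y^2)) ≤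
      6 * Real.sqrt (Real.sqrt (1+a'^2) ^ γ * (1 + a'^2 + b'^2 + c^2 + x'^2 + y'^2)) *
        (1+d) ^ ((4+γ)/2) := by
  set D := 1 + d with hDdef
  have hD1 : 1 ≤ D := by simp only [hDdef]; linarith only [hd0]
  have hD0 : (0:ℝ) ≤ D := by linarith only [hD1]
  have hdD : d ≤ D := by simp only [hDdef]; linarith only []
  set W := 1 + a^2 + b^2 + c^2 + x^2 + y^2 with hW
  set W' := 1 + a'^2 + b'^2 + c^2 + x'^2 + y'^2 with hW'
  have hW'1 : 1 ≤ W' := by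
    simp only [hW']
    linarith only [sq_nonneg a', sq_nonneg b', sq_nonneg c, sq_nonneg x', sq_nonneg y']
  have hW'0 : (0:ℝ) ≤ W' := by linarith only [hW'1]
  have hv'W : a'^2 ≤ W' := by
    simp only [hW']
    linarith only [sq_nonneg b', sq_nonneg c, sq_nonneg x', sq_nonneg y']
  have hη'W : b'^2 ≤ W' := by
    simp only [hW']
    linarith only [sq_nonneg a', sq_nonneg c, sq_nonneg x', sq_nonneg y']
  have hξW : c^2 ≤ W' := by
    simp only [hW']
    linarith only [sq_nonneg a', sq_nonneg b', sq_nonneg x', sq_nonneg y']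
  have hXW : x'^2 ≤ W' := by
    simp only [hW']
    linarith only [sq_nonneg a', sq_nonneg b', sq_nonneg c, sq_nonneg y']
  have hYW : y'^2 ≤ W' := by
    simp only [hW']
    linarith only [sq_nonneg a', sq_nonneg b', sq_nonneg c, sq_nonneg x']
  have hD4 : (1:ℝ) ≤ D^4 := by
    have := pow_le_pow_left₀ zero_le_one hD1 4
    simpa using this
  have hd2D2 : d^2 ≤ D^2 := pow_le_pow_left₀ hd0 hdD 2
  have hD2D4 : D^2 ≤ D^4 := pow_le_pow_right₀ hD1 (by norm_num)
  have hW'D4 : W' ≤ W' * D^4 := le_mul_of_one_le_right hW'0 hD4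
  have hD4W : D^4 ≤ W' * D^4 := le_mul_of_one_le_left (by positivity) hW'1
  have hd2WD : d^2 ≤ W' * D^4 := hd2D2.trans (hD2D4.trans hD4W)
  have t1 : (1:ℝ) ≤ W' * D^4 := one_le_mul_of_one_le_of_one_le hW'1 hD4
  have t2 : a^2 ≤ 4 * (W' * D^4) := by
    have h := aux_sq_sum2 a a' d ha0 ha
    linarith only [h, hv'W.trans hW'D4, hd2WD]
  have t3 : b^2 ≤ 4 * (W' * D^4) := by
    have h := aux_sq_sum2 b b' d hb0 hb
    linarith only [h, hη'W.trans hW'D4, hd2WD]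
  have t4 : c^2 ≤ W' * D^4 := hξW.trans hW'D4
  have t5 : x^2 ≤ 16 * (W' * D^4) := by
    have h := aux_sq_sum4 x (d*d) (d*b') (a'*d) x' hx0 hx
    have b1 : (d*d)^2 ≤ W' * D^4 := by
      calc (d*d)^2 = d^2 * d^2 := by ring
        _ ≤ D^2 * D^2 := mul_le_mul hd2D2 hd2D2 (sq_nonneg d) (sq_nonneg D)
        _ = D^4 := by ring
        _ ≤ W' * D^4 := hD4W
    have b2 : (d*b')^2 ≤ W' * D^4 := by
      calc (d*b')^2 = d^2 * b'^2 := by ring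
        _ ≤ D^2 * W' := mul_le_mul hd2D2 hη'W (sq_nonneg b') (sq_nonneg D)
        _ ≤ D^4 * W' := mul_le_mul_of_nonneg_right hD2D4 hW'0
        _ = W' * D^4 := by ring
    have b3 : (a'*d)^2 ≤ W' * D^4 := by
      calc (a'*d)^2 = a'^2 * d^2 := by ring
        _ ≤ W' * D^2 := mul_le_mul hv'W hd2D2 (sq_nonneg d) hW'0
        _ ≤ W' * D^4 := mul_le_mul_of_nonneg_left hD2D4 hW'0
    have b4 : x'^2 ≤ W' * D^4 := hXW.trans hW'D4
    linarith only [h, b1, b2, b3, b4]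
  have t6 : y^2 ≤ 4 * (W' * D^4) := by
    have h := aux_sq_sum2' y (d*c) y' hy0 hy
    have b1 : (d*c)^2 ≤ W' * D^4 := by
      calc (d*c)^2 = d^2 * c^2 := by ring
        _ ≤ D^2 * W' := mul_le_mul hd2D2 hξW (sq_nonneg c) (sq_nonneg D)
        _ ≤ D^4 * W' := mul_le_mul_of_nonneg_right hD2D4 hW'0
        _ = W' * D^4 := by ring
    have b2 : y'^2 ≤ W' * D^4 := hYW.trans hW'D4
    linarith only [h, b1, b2]
  have hWbd : W ≤ 30 * (W' * D^4) := by
    simp only [hW]; linarith only [t1, t2, t3, t4, t5, t6]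
  have hjb'1 : 1 ≤ Real.sqrt (1+a'^2) := by
    rw [show (1:ℝ) = Real.sqrt 1 from Real.sqrt_one.symm]
    apply Real.sqrt_le_sqrt
    rw [Real.sqrt_one]
    linarith only [sq_nonneg a']
  have hjb'0 : (0:ℝ) ≤ Real.sqrt (1+a'^2) := Real.sqrt_nonneg _
  have hjb : Real.sqrt (1+a^2) ≤ Real.sqrt (1+a'^2) * D := by
    have hmono : Real.sqrt (1+a^2) ≤ Real.sqrt (1+(a'+d)^2) := by
      apply Real.sqrt_le_sqrt
      have := pow_le_pow_left₀ ha0 ha 2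
      linarith only [this]
    have h2 := aux_sqrt_peetre a' d ha'0 hd0
    have h3 : d ≤ Real.sqrt (1+a'^2) * d := le_mul_of_one_le_left hd0 hjb'1
    have h4 : Real.sqrt (1+a'^2) * D = Real.sqrt (1+a'^2) + Real.sqrt (1+a'^2) * d := by
      rw [hDdef]; ring
    linarith only [hmono, h2, h3, h4]
  have hjb0 : (0:ℝ) ≤ Real.sqrt (1+a^2) := Real.sqrt_nonneg _
  have hrpow : Real.sqrt (1+a^2) ^ γ ≤ Real.sqrt (1+a'^2) ^ γ * D ^ γ := by
    calc Real.sqrt (1+a^2) ^ γ ≤ (Real.sqrt (1+a'^2) * D) ^ γ :=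
          Real.rpow_le_rpow hjb0 hjb hγ0
      _ = _ := Real.mul_rpow hjb'0 hD0
  have hjb'γ0 : (0:ℝ) ≤ Real.sqrt (1+a'^2) ^ γ := Real.rpow_nonneg hjb'0 γ
  have hDγ0 : (0:ℝ) ≤ D ^ γ := Real.rpow_nonneg hD0 γ
  have hW0 : (0:ℝ) ≤ W := by
    simp only [hW]
    linarith only [sq_nonneg a, sq_nonneg b, sq_nonneg c, sq_nonneg x, sq_nonneg y]
  have key : Real.sqrt (1+a^2) ^ γ * W ≤
      30 * (Real.sqrt (1+a'^2) ^ γ * W') * (D ^ γ * D ^ 4) := by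
    calc Real.sqrt (1+a^2) ^ γ * W
        ≤ (Real.sqrt (1+a'^2) ^ γ * D ^ γ) * (30 * (W' * D^4)) :=
          mul_le_mul hrpow hWbd hW0 (mul_nonneg hjb'γ0 hDγ0)
      _ = 30 * (Real.sqrt (1+a'^2) ^ γ * W') * (D ^ γ * D ^ 4) := by ring
  have hE : D ^ γ * D ^ 4 = D ^ (4 + γ) := by
    rw [show D ^ (4:ℕ) = D ^ ((4:ℕ):ℝ) from (Real.rpow_natCast D 4).symm,
      ← Real.rpow_add (by linarith only [hD1] : (0:ℝ) < D)]
    norm_num [add_comm]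
  rw [hE] at key
  have hA'0 : (0:ℝ) ≤ Real.sqrt (1+a'^2) ^ γ * W' := mul_nonneg hjb'γ0 hW'0
  have hEpos : (0:ℝ) ≤ D ^ (4+γ) := Real.rpow_nonneg hD0 _
  have hhalf : (D ^ ((4+γ)/2))^2 = D ^ (4+γ) := by
    rw [← Real.rpow_natCast (D ^ ((4+γ)/2)) 2, ← Real.rpow_mul hD0]
    norm_num
  have final : Real.sqrt (1+a^2) ^ γ * W ≤
      (6 * Real.sqrt (Real.sqrt (1+a'^2) ^ γ * W') * D ^ ((4+γ)/2))^2 := by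
    have heq : (6 * Real.sqrt (Real.sqrt (1+a'^2) ^ γ * W') * D ^ ((4+γ)/2))^2
        = 36 * (Real.sqrt (1+a'^2) ^ γ * W') * D ^ (4+γ) := by
      rw [mul_pow, mul_pow, Real.sq_sqrt hA'0, hhalf]; ring
    rw [heq]
    have h6 : (0:ℝ) ≤ (Real.sqrt (1+a'^2) ^ γ * W') * D ^ (4+γ) :=
      mul_nonneg hA'0 hEpos
    linarith only [key, h6]
  calc Real.sqrt (Real.sqrt (1+a^2) ^ γ * W)
      ≤ Real.sqrt ((6 * Real.sqrt (Real.sqrt (1+a'^2) ^ γ * W') * D ^ ((4+γ)/2))^2) :=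
        Real.sqrt_le_sqrt final
    _ = 6 * Real.sqrt (Real.sqrt (1+a'^2) ^ γ * W') * D ^ ((4+γ)/2) :=
        Real.sqrt_sq (by positivity)

/- Auxiliary geometric lemmas about `cross`. -/

lemma norm_sq_eq3 (y : EuclideanSpace ℝ (Fin 3)) : ‖y‖^2 = y 0^2 + y 1^2 + y 2^2 := by
  rw [EuclideanSpace.norm_eq, Real.sq_sqrt (by positivity)]
  simp [Fin.sum_univ_three, Real.norm_eq_abs, sq_abs]

lemma cross_apply3 (v w : EuclideanSpace ℝ (Fin 3)) :
    cross v w 0 = v 1 * w 2 - v 2 * w 1 ∧ cross v w 1 = v 2 * w 0 - v 0 * w 2 ∧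
      cross v w 2 = v 0 * w 1 - v 1 * w 0 := by
  refine ⟨?_, ?_, ?_⟩ <;> simp [cross]

lemma cross_decomp (v v' η η' : EuclideanSpace ℝ (Fin 3)) :
    cross v η = cross (v-v') (η-η') + cross (v-v') η' + cross v' (η-η') + cross v' η' := by
  ext i
  fin_cases i <;> simp [cross, PiLp.add_apply, PiLp.sub_apply] <;> ring

lemma cross_decomp2 (v v' ξ : EuclideanSpace ℝ (Fin 3)) :
    cross v ξ = cross (v-v') ξ + cross v' ξ := by
  ext i
  fin_cases i <;> simp [cross, PiLp.add_apply, PiLp.sub_apply] <;> ring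

lemma norm_cross_sq_le (a b : EuclideanSpace ℝ (Fin 3)) :
    ‖cross a b‖^2 ≤ ‖a‖^2 * ‖b‖^2 := by
  obtain ⟨h0, h1, h2⟩ := cross_apply3 a b
  rw [norm_sq_eq3, norm_sq_eq3, norm_sq_eq3, h0, h1, h2]
  nlinarith [sq_nonneg (a 0 * b 0 + a 1 * b 1 + a 2 * b 2)]

lemma norm_cross_le (a b : EuclideanSpace ℝ (Fin 3)) :
    ‖cross a b‖ ≤ ‖a‖ * ‖b‖ := by
  nlinarith [norm_cross_sq_le a b, norm_nonneg (cross a b),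
    mul_nonneg (norm_nonneg a) (norm_nonneg b)]

/-- `λ` is an admissible weight, uniformly in the parameter `ξ`, with exponent `(4+γ)/2`. -/
theorem lam_admissible_weight (γ : ℝ) (hγ : γ ∈ Set.Icc (0 : ℝ) 1) :
    ∃ C > 0, ∀ ξ v η v' η' : EuclideanSpace ℝ (Fin 3),
      lam γ ξ v η ≤ C * lam γ ξ v' η' *
        (1 + Real.sqrt (‖v - v'‖ ^ 2 + ‖η - η'‖ ^ 2)) ^ ((4 + γ) / 2) := by
  obtain ⟨hγ0, hγ1⟩ := hγ
  refine ⟨6, by norm_num, fun ξ v η v' η' => ?_⟩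
  set d := Real.sqrt (‖v - v'‖ ^ 2 + ‖η - η'‖ ^ 2) with hd
  have hd0 : 0 ≤ d := Real.sqrt_nonneg _
  have hvd : ‖v - v'‖ ≤ d := by
    have h := Real.sqrt_le_sqrt
      (show ‖v - v'‖^2 ≤ ‖v - v'‖^2 + ‖η - η'‖^2 by linarith only [sq_nonneg ‖η - η'‖])
    rwa [Real.sqrt_sq (norm_nonneg _)] at h
  have hηd : ‖η - η'‖ ≤ d := by
    have h := Real.sqrt_le_sqrt
      (show ‖η - η'‖^2 ≤ ‖v - v'‖^2 + ‖η - η'‖^2 by linarith only [sq_nonneg ‖v - v'‖])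
    rwa [Real.sqrt_sq (norm_nonneg _)] at h
  have ha : ‖v‖ ≤ ‖v'‖ + d := by
    have h := norm_sub_norm_le v v'
    linarith only [h, hvd]
  have hb : ‖η‖ ≤ ‖η'‖ + d := by
    have h := norm_sub_norm_le η η'
    linarith only [h, hηd]
  have hx : ‖cross v η‖ ≤ d*d + d*‖η'‖ + ‖v'‖*d + ‖cross v' η'‖ := by
    rw [cross_decomp v v' η η']
    have n1 : ‖cross (v-v') (η-η')‖ ≤ d*d :=
      (norm_cross_le _ _).trans (mul_le_mul hvd hηd (norm_nonneg _) hd0)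
    have n2 : ‖cross (v-v') η'‖ ≤ d*‖η'‖ :=
      (norm_cross_le _ _).trans (mul_le_mul_of_nonneg_right hvd (norm_nonneg _))
    have n3 : ‖cross v' (η-η')‖ ≤ ‖v'‖*d :=
      (norm_cross_le _ _).trans (mul_le_mul_of_nonneg_left hηd (norm_nonneg _))
    have m1 := norm_add_le (cross (v-v') (η-η') + cross (v-v') η' + cross v' (η-η'))
      (cross v' η')
    have m2 := norm_add_le (cross (v-v') (η-η') + cross (v-v') η') (cross v' (η-η'))
    have m3 := norm_add_le (cross (v-v') (η-η')) (cross (v-v') η')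
    linarith only [m1, m2, m3, n1, n2, n3]
  have hy : ‖cross v ξ‖ ≤ d*‖ξ‖ + ‖cross v' ξ‖ := by
    rw [cross_decomp2 v v' ξ]
    have n1 : ‖cross (v-v') ξ‖ ≤ d*‖ξ‖ :=
      (norm_cross_le _ _).trans (mul_le_mul_of_nonneg_right hvd (norm_nonneg _))
    have m1 := norm_add_le (cross (v-v') ξ) (cross v' ξ)
    linarith only [m1, n1]
  have := main_scalar_ineq γ d ‖v‖ ‖η‖ ‖ξ‖ ‖cross v η‖ ‖cross v ξ‖
    ‖v'‖ ‖η'‖ ‖cross v' η'‖ ‖cross v' ξ‖ hγ0 hd0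
    (norm_nonneg _) (norm_nonneg _) (norm_nonneg _) (norm_nonneg _) (norm_nonneg _)
    (norm_nonneg _) (norm_nonneg _) (norm_nonneg _) (norm_nonneg _)
    ha hb hx hy
  simpa only [lam, jb] using this
end

section
/- Let a(v,η) = 1 + |v|² + |η|² + |ξ|² + |v∧η|² + |v∧ξ|² on ℝ³×ℝ³ with parameter ξ ∈ ℝ³. Then for every k ∈ ℝ and all multi-indices α, β, |∂_v^α ∂_η^β (a^k)| ≤ C_{α,β,k} a^k, with constants independent of ξ. -/
/-!
Write `a = (1 + |ξ|²) + |v|² + |η|² + |v ∧ η|² + |v ∧ ξ|²`. The maps `v`, `η` and `v ∧ ξ` are linear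
in `(v, η)` and `v ∧ η` is bilinear; their values at `(v, η)` are terms of `a`, and their operator
norms are at most `1` or `|ξ| ≤ √a`. Hence every derivative of each of them is bounded by `2 √a`,
uniformly in `ξ`, and Leibniz's rule for the squared norms gives `|∂ⁿ a| ≲ a`. Finally
`D (a ^ k) = k a ^ (k - 1) D a`, so by induction on the order, simultaneously for all real `k`,
Leibniz's rule gives `|∂ʲ (a ^ k)| ≲ a ^ (k - 1) · a = a ^ k`.
-/

open Real

/-- The symbol `a(v,η) = 1 + |v|² + |η|² + |ξ|² + |v∧η|² + |v∧ξ|²`. -/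
noncomputable def symbA (ξ : EuclideanSpace ℝ (Fin 3))
    (Y : EuclideanSpace ℝ (Fin 3) × EuclideanSpace ℝ (Fin 3)) : ℝ :=
  1 + ‖Y.1‖ ^ 2 + ‖Y.2‖ ^ 2 + ‖ξ‖ ^ 2 + ‖cross Y.1 Y.2‖ ^ 2 + ‖cross Y.1 ξ‖ ^ 2

open Filter Matrix
open scoped ContDiff

section IteratedFDerivBounds

variable {D E F G : Type*} [NormedAddCommGroup D] [NormedSpace ℝ D]
  [NormedAddCommGroup E] [NormedSpace ℝ E] [NormedAddCommGroup F] [NormedSpace ℝ F]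
  [NormedAddCommGroup G] [NormedSpace ℝ G]

theorem norm_iteratedFDeriv_fun_add_le {f g : E → F} {n : ℕ} {x : E}
    (hf : ContDiffAt ℝ n f x) (hg : ContDiffAt ℝ n g x) :
    ‖iteratedFDeriv ℝ n (fun y => f y + g y) x‖ ≤
      ‖iteratedFDeriv ℝ n f x‖ + ‖iteratedFDeriv ℝ n g x‖ := by
  rw [fun_iteratedFDeriv_add_apply hf hg]
  exact norm_add_le _ _

theorem norm_iteratedFDeriv_const_le (c : F) (n : ℕ) (x : E) :
    ‖iteratedFDeriv ℝ n (fun _ : E => c) x‖ ≤ ‖c‖ := by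
  cases n with
  | zero => simp
  | succ n => simp [iteratedFDeriv_succ_const]

theorem ContinuousLinearMap.norm_iteratedFDeriv_le (L : E →L[ℝ] F) (n : ℕ) (x : E) {M : ℝ}
    (hx : ‖L x‖ ≤ M) (hL : ‖L‖ ≤ M) : ‖iteratedFDeriv ℝ n L x‖ ≤ M := by
  cases n with
  | zero => simpa
  | succ n =>
    rw [← norm_iteratedFDeriv_fderiv, show fderiv ℝ L = fun _ => L from funext fun _ => L.fderiv]
    exact (norm_iteratedFDeriv_const_le L n x).trans hL

theorem ContinuousLinearMap.norm_deriv₂_apply_le (B : E →L[ℝ] F →L[ℝ] G) (p : E × F) :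
    ‖B.deriv₂ p‖ ≤ ‖B‖ * (‖p.1‖ + ‖p.2‖) := by
  refine ContinuousLinearMap.opNorm_le_bound _ (by positivity) fun q => ?_
  rw [ContinuousLinearMap.coe_deriv₂]
  calc ‖B p.1 q.2 + B q.1 p.2‖ ≤ ‖B‖ * ‖p.1‖ * ‖q.2‖ + ‖B‖ * ‖q.1‖ * ‖p.2‖ :=
        (norm_add_le _ _).trans (add_le_add (B.le_opNorm₂ _ _) (B.le_opNorm₂ _ _))
    _ ≤ ‖B‖ * ‖p.1‖ * ‖q‖ + ‖B‖ * ‖q‖ * ‖p.2‖ := by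
        gcongr
        exacts [_root_.norm_snd_le q, _root_.norm_fst_le q]
    _ = ‖B‖ * (‖p.1‖ + ‖p.2‖) * ‖q‖ := by ring

theorem ContinuousLinearMap.norm_deriv₂_le (B : E →L[ℝ] F →L[ℝ] G) : ‖B.deriv₂‖ ≤ 2 * ‖B‖ := by
  refine ContinuousLinearMap.opNorm_le_bound _ (by positivity) fun p =>
    (B.norm_deriv₂_apply_le p).trans ?_
  nlinarith [_root_.norm_fst_le p, _root_.norm_snd_le p, norm_nonneg B]

/-- `h₀`, `h₁`, `h₂` bound the value, the first and the second derivative of the quadratic map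
`q ↦ B q.1 q.2` at `p`; the higher derivatives vanish. -/
theorem ContinuousLinearMap.norm_iteratedFDeriv_apply_fst_snd_le (B : E →L[ℝ] F →L[ℝ] G)
    (n : ℕ) (p : E × F) {M : ℝ} (h₀ : ‖B p.1 p.2‖ ≤ M) (h₁ : ‖B‖ * (‖p.1‖ + ‖p.2‖) ≤ M)
    (h₂ : 2 * ‖B‖ ≤ M) : ‖iteratedFDeriv ℝ n (fun q : E × F => B q.1 q.2) p‖ ≤ M := by
  cases n with
  | zero => simpa
  | succ n =>
    rw [← norm_iteratedFDeriv_fderiv,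
      show fderiv ℝ (fun q : E × F => B q.1 q.2) = B.deriv₂ from
        funext B.isBoundedBilinearMap.fderiv]
    exact B.deriv₂.norm_iteratedFDeriv_le n p ((B.norm_deriv₂_apply_le p).trans h₁)
      (B.norm_deriv₂_le.trans h₂)

theorem ContinuousLinearMap.norm_iteratedFDeriv_le_two_pow_of_bilinear (B : E →L[ℝ] F →L[ℝ] G)
    (hB : ‖B‖ ≤ 1) {f : D → E} {g : D → F} {N : ℕ∞ω} (hf : ContDiff ℝ N f) (hg : ContDiff ℝ N g)
    (x : D) {n : ℕ} (hn : n ≤ N) {M₁ M₂ : ℝ} (hfM : ∀ i ≤ n, ‖iteratedFDeriv ℝ i f x‖ ≤ M₁)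
    (hgM : ∀ i ≤ n, ‖iteratedFDeriv ℝ i g x‖ ≤ M₂) :
    ‖iteratedFDeriv ℝ n (fun y => B (f y) (g y)) x‖ ≤ 2 ^ n * M₁ * M₂ := by
  have hM₁ : 0 ≤ M₁ := (norm_nonneg _).trans (hfM 0 n.zero_le)
  refine (B.norm_iteratedFDeriv_le_of_bilinear_of_le_one hf hg x hn hB).trans ?_
  calc ∑ i ∈ Finset.range (n + 1), (n.choose i : ℝ) * ‖iteratedFDeriv ℝ i f x‖ *
        ‖iteratedFDeriv ℝ (n - i) g x‖
      ≤ ∑ i ∈ Finset.range (n + 1), (n.choose i : ℝ) * M₁ * M₂ := by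
        gcongr with i hi
        · exact hfM i (Finset.mem_range_succ_iff.1 hi)
        · exact hgM (n - i) (n.sub_le i)
    _ = 2 ^ n * M₁ * M₂ := by
        rw [← Finset.sum_mul, ← Finset.sum_mul, ← Nat.cast_sum, Nat.sum_range_choose]
        push_cast; ring

theorem norm_iteratedFDeriv_norm_sq_le {H : Type*} [NormedAddCommGroup H] [InnerProductSpace ℝ H]
    {f : D → H} {N : ℕ∞ω} (hf : ContDiff ℝ N f) (x : D)
    {n : ℕ} (hn : n ≤ N) {M : ℝ} (hM : ∀ i ≤ n, ‖iteratedFDeriv ℝ i f x‖ ≤ M) :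
    ‖iteratedFDeriv ℝ n (fun y => ‖f y‖ ^ 2) x‖ ≤ 2 ^ n * M ^ 2 := by
  simp only [← real_inner_self_eq_norm_sq, ← innerSL_apply_apply ℝ]
  rw [sq, ← mul_assoc]
  exact (innerSL ℝ).norm_iteratedFDeriv_le_two_pow_of_bilinear (norm_innerSL_le ℝ) hf hf x hn hM hM

theorem fderiv_rpow_const_eq_smul {a : E → ℝ} (ha : Differentiable ℝ a) (ha_ne : ∀ x, a x ≠ 0)
    (k : ℝ) :
    fderiv ℝ (fun y => a y ^ k) = k • fun y => a y ^ (k - 1) • fderiv ℝ a y := by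
  funext x
  rw [((ha x).hasFDerivAt.rpow_const (Or.inl (ha_ne x))).fderiv]
  simp only [Pi.smul_apply, smul_smul]

theorem norm_iteratedFDeriv_succ_rpow_le {a : E → ℝ} (ha : ContDiff ℝ ∞ a)
    (ha_pos : ∀ x, 0 < a x) (k : ℝ) {j : ℕ} (x : E) {C₁ C₂ : ℝ}
    (h₁ : ∀ m ≤ j, ‖iteratedFDeriv ℝ m (fun y => a y ^ (k - 1)) x‖ ≤ C₁ * a x ^ (k - 1))
    (h₂ : ∀ m ≤ j, ‖iteratedFDeriv ℝ (m + 1) a x‖ ≤ C₂ * a x) :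
    ‖iteratedFDeriv ℝ (j + 1) (fun y => a y ^ k) x‖ ≤ |k| * (2 ^ j * C₁ * C₂) * a x ^ k := by
  have hf : ContDiff ℝ ∞ fun y => a y ^ (k - 1) := ha.rpow_const_of_ne fun y => (ha_pos y).ne'
  have hg : ContDiff ℝ ∞ (fderiv ℝ a) := ha.fderiv_right le_rfl
  have hj : (j : ℕ∞ω) ≤ ∞ := mod_cast le_top
  have hprod : ContDiffAt ℝ j (fun y => a y ^ (k - 1) • fderiv ℝ a y) x :=
    ((hf.smul hg).of_le hj).contDiffAt
  have hLeibniz : ‖iteratedFDeriv ℝ j (fun y => a y ^ (k - 1) • fderiv ℝ a y) x‖ ≤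
      2 ^ j * (C₁ * a x ^ (k - 1)) * (C₂ * a x) :=
    (ContinuousLinearMap.lsmul ℝ ℝ).norm_iteratedFDeriv_le_two_pow_of_bilinear
      ContinuousLinearMap.opNorm_lsmul_le hf hg x hj h₁
      fun m hm => norm_iteratedFDeriv_fderiv.trans_le (h₂ m hm)
  rw [← norm_iteratedFDeriv_fderiv, fderiv_rpow_const_eq_smul (ha.differentiable (by simp))
    (fun y => (ha_pos y).ne') k, iteratedFDeriv_const_smul_apply hprod, norm_smul,
    Real.norm_eq_abs]
  calc |k| * ‖iteratedFDeriv ℝ j (fun y => a y ^ (k - 1) • fderiv ℝ a y) x‖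
      ≤ |k| * (2 ^ j * (C₁ * a x ^ (k - 1)) * (C₂ * a x)) := by gcongr
    _ = |k| * (2 ^ j * C₁ * C₂) * a x ^ k := by
      have hx := (ha_pos x).ne'
      rw [rpow_sub_one hx]
      field_simp

theorem eventually_norm_iteratedFDeriv_rpow_le {ι : Type*} (a : ι → E → ℝ)
    (ha : ∀ i, ContDiff ℝ ∞ (a i)) (ha_pos : ∀ i x, 0 < a i x)
    (ha_deriv : ∀ n : ℕ, ∃ C, ∀ i x, ‖iteratedFDeriv ℝ n (a i) x‖ ≤ C * a i x) (j : ℕ) (k : ℝ) :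
    ∀ᶠ C in atTop, ∀ i x, ‖iteratedFDeriv ℝ j (fun y => a i y ^ k) x‖ ≤ C * a i x ^ k := by
  induction j using Nat.strong_induction_on generalizing k with
  | _ j IH =>
  cases j with
  | zero =>
    filter_upwards [eventually_ge_atTop 1] with C hC i x
    have hak := rpow_pos_of_pos (ha_pos i x) k
    rw [norm_iteratedFDeriv_zero, Real.norm_of_nonneg hak.le]
    exact le_mul_of_one_le_left hak.le hC
  | succ j =>
    obtain ⟨C₁, hC₁⟩ := ((Set.finite_Iic j).eventually_all.2 fun m hm =>
      IH m (Nat.lt_succ_of_le hm) (k - 1)).exists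
    have hD : ∀ᶠ C in atTop, ∀ m ∈ Set.Iic j, ∀ i x,
        ‖iteratedFDeriv ℝ (m + 1) (a i) x‖ ≤ C * a i x := by
      refine (Set.finite_Iic j).eventually_all.2 fun m _ => ?_
      obtain ⟨C, hC⟩ := ha_deriv (m + 1)
      filter_upwards [eventually_ge_atTop C] with C' hC' i x
      exact (hC i x).trans (mul_le_mul_of_nonneg_right hC' (ha_pos i x).le)
    obtain ⟨C₂, hC₂⟩ := hD.exists
    filter_upwards [eventually_ge_atTop (|k| * (2 ^ j * C₁ * C₂))] with C hC i x
    refine (norm_iteratedFDeriv_succ_rpow_le (ha i) (ha_pos i) k x (fun m hm => hC₁ m hm i x)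
      fun m hm => hC₂ m hm i x).trans ?_
    gcongr
    exact (rpow_pos_of_pos (ha_pos i x) k).le

end IteratedFDerivBounds

local notation "ℝ³" => EuclideanSpace ℝ (Fin 3)

theorem inner_cross_cross (u v w x : ℝ³) :
    inner ℝ (cross u v) (cross w x) = inner ℝ u w * inner ℝ v x - inner ℝ u x * inner ℝ v w := by
  simp only [EuclideanSpace.inner_eq_star_dotProduct, star_trivial]
  exact (cross_dot_cross _ _ _ _).trans (by ring)

theorem norm_cross_le_s14 (v w : ℝ³) : ‖cross v w‖ ≤ ‖v‖ * ‖w‖ := by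
  have lagrange := inner_cross_cross v w v w
  simp only [real_inner_self_eq_norm_sq, real_inner_comm w v] at lagrange
  have h : ‖cross v w‖ ^ 2 ≤ (‖v‖ * ‖w‖) ^ 2 := by nlinarith [sq_nonneg (inner ℝ v w)]
  exact (pow_le_pow_iff_left₀ (norm_nonneg _) (by positivity) two_ne_zero).1 h

noncomputable def crossL : ℝ³ →L[ℝ] ℝ³ →L[ℝ] ℝ³ :=
  LinearMap.mkContinuous₂
    ((crossProduct.compl₁₂ (WithLp.linearEquiv 2 ℝ (Fin 3 → ℝ)).toLinearMap
      (WithLp.linearEquiv 2 ℝ (Fin 3 → ℝ)).toLinearMap).compr₂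
        (WithLp.linearEquiv 2 ℝ (Fin 3 → ℝ)).symm.toLinearMap) 1
    fun v w => by rw [one_mul]; exact norm_cross_le_s14 v w

@[simp] theorem crossL_apply (v w : ℝ³) : crossL v w = cross v w := rfl

theorem norm_crossL_le : ‖crossL‖ ≤ 1 := LinearMap.mkContinuous₂_norm_le _ zero_le_one _

noncomputable def crossFstRight (ξ : ℝ³) : ℝ³ × ℝ³ →L[ℝ] ℝ³ :=
  (crossL.flip ξ).comp (ContinuousLinearMap.fst ℝ ℝ³ ℝ³)

@[simp] theorem crossFstRight_apply (ξ : ℝ³) (Y : ℝ³ × ℝ³) :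
    crossFstRight ξ Y = cross Y.1 ξ := rfl

theorem norm_crossFstRight_le (ξ : ℝ³) : ‖crossFstRight ξ‖ ≤ ‖ξ‖ :=
  ContinuousLinearMap.opNorm_le_bound _ (norm_nonneg ξ) fun Y => by
    rw [crossFstRight_apply, mul_comm]
    exact (norm_cross_le_s14 _ _).trans (by gcongr; exact norm_fst_le Y)

theorem symbA_eq (ξ : ℝ³) : symbA ξ = fun Y => (1 + ‖ξ‖ ^ 2) +
    ‖ContinuousLinearMap.fst ℝ ℝ³ ℝ³ Y‖ ^ 2 + ‖ContinuousLinearMap.snd ℝ ℝ³ ℝ³ Y‖ ^ 2 +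
      ‖crossL Y.1 Y.2‖ ^ 2 + ‖crossFstRight ξ Y‖ ^ 2 := by
  funext Y
  simp only [symbA, ContinuousLinearMap.coe_fst', ContinuousLinearMap.coe_snd', crossL_apply,
    crossFstRight_apply]
  ring

theorem contDiff_symbA (ξ : ℝ³) : ContDiff ℝ ∞ (symbA ξ) := by
  rw [symbA_eq]
  exact (((contDiff_const.add ((ContinuousLinearMap.fst ℝ ℝ³ ℝ³).contDiff.norm_sq ℝ)).add
    ((ContinuousLinearMap.snd ℝ ℝ³ ℝ³).contDiff.norm_sq ℝ)).add
      (crossL.isBoundedBilinearMap.contDiff.norm_sq ℝ)).add ((crossFstRight ξ).contDiff.norm_sq ℝ)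

theorem symbA_pos (ξ : ℝ³) (Y : ℝ³ × ℝ³) : 0 < symbA ξ Y := by
  unfold symbA; positivity

theorem le_sqrt_symbA (ξ : ℝ³) (Y : ℝ³ × ℝ³) :
    1 ≤ √(symbA ξ Y) ∧ ‖ξ‖ ≤ √(symbA ξ Y) ∧ ‖Y.1‖ ≤ √(symbA ξ Y) ∧ ‖Y.2‖ ≤ √(symbA ξ Y) ∧
      ‖cross Y.1 Y.2‖ ≤ √(symbA ξ Y) ∧ ‖cross Y.1 ξ‖ ≤ √(symbA ξ Y) := by
  refine ⟨?_, ?_, ?_, ?_, ?_, ?_⟩ <;>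
  · refine Real.le_sqrt_of_sq_le ?_
    unfold symbA
    nlinarith [sq_nonneg ‖Y.1‖, sq_nonneg ‖Y.2‖, sq_nonneg ‖ξ‖, sq_nonneg ‖cross Y.1 Y.2‖,
      sq_nonneg ‖cross Y.1 ξ‖]

theorem norm_iteratedFDeriv_symbA_components_le (ξ : ℝ³) (Y : ℝ³ × ℝ³) (m : ℕ) :
    ‖iteratedFDeriv ℝ m (ContinuousLinearMap.fst ℝ ℝ³ ℝ³) Y‖ ≤ 2 * √(symbA ξ Y) ∧
      ‖iteratedFDeriv ℝ m (ContinuousLinearMap.snd ℝ ℝ³ ℝ³) Y‖ ≤ 2 * √(symbA ξ Y) ∧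
      ‖iteratedFDeriv ℝ m (fun Y : ℝ³ × ℝ³ => crossL Y.1 Y.2) Y‖ ≤ 2 * √(symbA ξ Y) ∧
      ‖iteratedFDeriv ℝ m (crossFstRight ξ) Y‖ ≤ 2 * √(symbA ξ Y) := by
  obtain ⟨h1, hξ, hv, hη, hvη, hvξ⟩ := le_sqrt_symbA ξ Y
  have hB := norm_crossL_le
  refine ⟨?_, ?_, ?_, ?_⟩
  · refine ContinuousLinearMap.norm_iteratedFDeriv_le _ m Y ?_ ?_
    · simpa using hv.trans (by linarith)
    · exact (ContinuousLinearMap.norm_fst_le ℝ ℝ³ ℝ³).trans (by linarith)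
  · refine ContinuousLinearMap.norm_iteratedFDeriv_le _ m Y ?_ ?_
    · simpa using hη.trans (by linarith)
    · exact (ContinuousLinearMap.norm_snd_le ℝ ℝ³ ℝ³).trans (by linarith)
  · refine crossL.norm_iteratedFDeriv_apply_fst_snd_le m Y ?_ ?_ ?_
    · simpa using hvη.trans (by linarith)
    · nlinarith [norm_nonneg crossL]
    · linarith
  · refine ContinuousLinearMap.norm_iteratedFDeriv_le _ m Y ?_ ?_
    · simpa using hvξ.trans (by linarith)
    · exact (norm_crossFstRight_le ξ).trans (by linarith)

theorem norm_iteratedFDeriv_symbA_le (ξ : ℝ³) (Y : ℝ³ × ℝ³) (n : ℕ) :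
    ‖iteratedFDeriv ℝ n (symbA ξ) Y‖ ≤ (1 + 2 ^ n * 16) * symbA ξ Y := by
  have hn : (n : ℕ∞ω) ≤ ∞ := mod_cast le_top
  have piece : ∀ f : ℝ³ × ℝ³ → ℝ³, ContDiff ℝ ∞ f →
      (∀ m, ‖iteratedFDeriv ℝ m f Y‖ ≤ 2 * √(symbA ξ Y)) →
      ContDiffAt ℝ n (fun Y => ‖f Y‖ ^ 2) Y ∧
        ‖iteratedFDeriv ℝ n (fun Y => ‖f Y‖ ^ 2) Y‖ ≤ 2 ^ n * 4 * symbA ξ Y := by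
    intro f hf hfM
    refine ⟨((hf.norm_sq ℝ).of_le hn).contDiffAt, ?_⟩
    refine (norm_iteratedFDeriv_norm_sq_le hf Y hn fun m _ => hfM m).trans_eq ?_
    rw [mul_pow, sq_sqrt (symbA_pos ξ Y).le]
    ring
  obtain ⟨c₁, b₁⟩ := piece _ (ContinuousLinearMap.fst ℝ ℝ³ ℝ³).contDiff
    fun m => (norm_iteratedFDeriv_symbA_components_le ξ Y m).1
  obtain ⟨c₂, b₂⟩ := piece _ (ContinuousLinearMap.snd ℝ ℝ³ ℝ³).contDiff
    fun m => (norm_iteratedFDeriv_symbA_components_le ξ Y m).2.1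
  obtain ⟨c₃, b₃⟩ := piece _ crossL.isBoundedBilinearMap.contDiff
    fun m => (norm_iteratedFDeriv_symbA_components_le ξ Y m).2.2.1
  obtain ⟨c₄, b₄⟩ := piece _ (crossFstRight ξ).contDiff
    fun m => (norm_iteratedFDeriv_symbA_components_le ξ Y m).2.2.2
  have c₀ : ContDiffAt ℝ n (fun _ : ℝ³ × ℝ³ => 1 + ‖ξ‖ ^ 2) Y := contDiffAt_const
  have b₀ := norm_iteratedFDeriv_const_le (1 + ‖ξ‖ ^ 2) n Y
  rw [Real.norm_of_nonneg (by positivity)] at b₀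
  have hc : 1 + ‖ξ‖ ^ 2 ≤ symbA ξ Y := by
    unfold symbA; nlinarith [sq_nonneg ‖Y.1‖, sq_nonneg ‖Y.2‖, sq_nonneg ‖cross Y.1 Y.2‖,
      sq_nonneg ‖cross Y.1 ξ‖]
  conv_lhs => rw [symbA_eq]
  refine (norm_iteratedFDeriv_fun_add_le (((c₀.add c₁).add c₂).add c₃) c₄).trans ?_
  grw [norm_iteratedFDeriv_fun_add_le ((c₀.add c₁).add c₂) c₃,
    norm_iteratedFDeriv_fun_add_le (c₀.add c₁) c₂, norm_iteratedFDeriv_fun_add_le c₀ c₁]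
  linarith

/-- All derivatives of `a^k` are bounded by constants times `a^k`, uniformly in `ξ`. -/
theorem symbA_power_derivatives (k : ℝ) (j : ℕ) :
    ∃ C > 0, ∀ ξ : EuclideanSpace ℝ (Fin 3),
      ∀ Y : EuclideanSpace ℝ (Fin 3) × EuclideanSpace ℝ (Fin 3),
        ‖iteratedFDeriv ℝ j (fun W => symbA ξ W ^ k) Y‖ ≤ C * symbA ξ Y ^ k := by
  have h := eventually_norm_iteratedFDeriv_rpow_le symbA contDiff_symbA symbA_pos
    (fun n => ⟨1 + 2 ^ n * 16, fun ξ Y => norm_iteratedFDeriv_symbA_le ξ Y n⟩) j k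
  obtain ⟨C, hC, hC_pos⟩ := (h.and (eventually_gt_atTop 0)).exists
  exact ⟨C, hC_pos, hC⟩
end
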